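/- Over the polynomial ring R = ℚ[y,q], let C(x) = x(1 − q²x²y) / ((1+xq)(1+xyq)) ∈ R[[x]], let D = C^{⟨−1⟩}, and let P = x·(1 + y + yq·D(x)) ∈ R[[x]] (the generating function of contracted plabic trees). Then P satisfies the cubic algebraic relation 0 = P³ + x(y(qx−3)−3)·P² + x²(3 − y(qx(y+1) − 3y − 5))·P − x³(1 + y(y(−qx+y+2)+2)) in R[[x]], where the coefficients are the indicated polynomials in x, y, q. -/

import Mathlib

open PowerSeries

/-- Composition `f ∘ g` of formal power series, intended for `g` with zero
constant term. -/
noncomputable def pscomp {R : Type*} [CommRing R] (f g : PowerSeries R) : PowerSeries R :=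
  PowerSeries.mk fun n => ∑ k ∈ Finset.range (n + 1), (coeff k f) * (coeff n (g ^ k))


section Aux

variable {R : Type*} [CommRing R]

lemma coeff_pow_zero' {g : PowerSeries R} (hg : constantCoeff g = 0)
    {n k : ℕ} (h : n < k) : coeff n (g ^ k) = 0 := by
  obtain ⟨h', rfl⟩ := X_dvd_iff.mpr hg
  rw [mul_pow, coeff_X_pow_mul', if_neg (not_le.mpr h)]

lemma coeff_pscomp {f g : PowerSeries R} (n : ℕ) :
    coeff n (pscomp f g) = ∑ k ∈ Finset.range (n + 1), (coeff k f) * (coeff n (g ^ k)) := by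
  simp [pscomp]

lemma coeff_pscomp' {f g : PowerSeries R} (hg : constantCoeff g = 0) {n N : ℕ} (h : n < N) :
    coeff n (pscomp f g) = ∑ k ∈ Finset.range N, (coeff k f) * (coeff n (g ^ k)) := by
  rw [coeff_pscomp]
  refine Finset.sum_subset (Finset.range_subset_range.mpr (by omega)) ?_
  intro k hk hk'
  rw [coeff_pow_zero' hg (by simp at hk hk'; omega), mul_zero]

lemma pscomp_add (f₁ f₂ g : PowerSeries R) :
    pscomp (f₁ + f₂) g = pscomp f₁ g + pscomp f₂ g := by
  ext n
  simp [coeff_pscomp, add_mul, Finset.sum_add_distrib]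

lemma pscomp_C_mul (r : R) (f g : PowerSeries R) :
    pscomp (PowerSeries.C r * f) g = PowerSeries.C r * pscomp f g := by
  ext n
  simp [coeff_pscomp, Finset.mul_sum, mul_assoc]

lemma pscomp_mul_X {f g : PowerSeries R} (hg : constantCoeff g = 0) :
    pscomp (f * X) g = pscomp f g * g := by
  ext n
  rw [coeff_mul]
  have h1 : ∀ p ∈ Finset.HasAntidiagonal.antidiagonal n, coeff p.1 (pscomp f g) * coeff p.2 g
      = ∑ j ∈ Finset.range (n + 1), coeff j f * (coeff p.1 (g ^ j) * coeff p.2 g) := by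
    intro p hp
    rw [coeff_pscomp' hg (Nat.lt_succ_of_le (Finset.HasAntidiagonal.antidiagonal.fst_le hp)), Finset.sum_mul]
    exact Finset.sum_congr rfl fun j _ => by ring
  rw [Finset.sum_congr rfl h1, Finset.sum_comm]
  have h2 : ∀ j ∈ Finset.range (n + 1),
      ∑ p ∈ Finset.HasAntidiagonal.antidiagonal n, coeff j f * (coeff p.1 (g ^ j) * coeff p.2 g)
      = coeff j f * coeff n (g ^ (j + 1)) := by
    intro j _
    rw [← Finset.mul_sum, pow_succ, coeff_mul]
  rw [Finset.sum_congr rfl h2, coeff_pscomp]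
  rw [Finset.sum_range_succ', Finset.sum_range_succ]
  simp [coeff_succ_mul_X, coeff_zero_mul_X, coeff_pow_zero' hg (Nat.lt_succ_self n)]

lemma pscomp_one (g : PowerSeries R) : pscomp 1 g = 1 := by
  ext n
  rw [coeff_pscomp]
  simp [coeff_one]

lemma pscomp_X {g : PowerSeries R} (hg : constantCoeff g = 0) : pscomp X g = g := by
  have h := pscomp_mul_X (f := (1 : PowerSeries R)) hg
  rw [one_mul, pscomp_one, one_mul] at h
  exact h

lemma pscomp_mul_X_pow {f g : PowerSeries R} (hg : constantCoeff g = 0) (k : ℕ) :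
    pscomp (f * X ^ k) g = pscomp f g * g ^ k := by
  induction k with
  | zero => simp
  | succ m ih =>
    rw [pow_succ, ← mul_assoc, pscomp_mul_X hg, ih, pow_succ, mul_assoc]

end Aux

/-- The base ring `R = ℚ[y, q]`. -/
abbrev Ryq : Type := MvPolynomial (Fin 2) ℚ

/-- The variable `y`, as a constant power series over `ℚ[y, q]`. -/
noncomputable def Y : PowerSeries Ryq := PowerSeries.C (MvPolynomial.X 0)

/-- The variable `q`, as a constant power series over `ℚ[y, q]`. -/
noncomputable def Q : PowerSeries Ryq := PowerSeries.C (MvPolynomial.X 1)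

/-- **The cubic algebraic relation for the contracted plabic tree generating
function.**  Over `R = ℚ[y,q]`, let `C(x) = x(1 − q²x²y)/((1+xq)(1+xyq))`
(the unique series with `C·(1+xq)(1+xyq) = x(1−q²x²y)`), let `D = C^{⟨−1⟩}`,
and let `P = x(1 + y + yq·D(x))` be the generating function of contracted
plabic trees.  Then
`0 = P³ + x(y(qx−3)−3)·P² + x²(3 − y(qx(y+1) − 3y − 5))·P − x³(1 + y(y(−qx+y+2)+2))`. -/
theorem plabic_tree_cubic_relation (C D P : PowerSeries Ryq)
    (hC : C * ((1 + X * Q) * (1 + X * Y * Q)) = X * (1 - Q ^ 2 * X ^ 2 * Y))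
    (hD0 : constantCoeff D = 0)
    (hCD : pscomp C D = X) (hDC : pscomp D C = X)
    (hP : P = X * (1 + Y + Y * Q * D)) :
    0 = P ^ 3 + X * (Y * (Q * X - 3) - 3) * P ^ 2
      + X ^ 2 * (3 - Y * (Q * X * (Y + 1) - 3 * Y - 5)) * P
      - X ^ 3 * (1 + Y * (Y * (-(Q * X) + Y + 2) + 2)) := by
  set y0 : Ryq := MvPolynomial.X 0 with hy0
  set q0 : Ryq := MvPolynomial.X 1 with hq0
  have hC2 : C + PowerSeries.C q0 * (C * X ^ 1)
      + PowerSeries.C (y0 * q0) * (C * X ^ 1)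
      + PowerSeries.C (y0 * q0 ^ 2) * (C * X ^ 2)
      = X + PowerSeries.C (-(q0 ^ 2 * y0)) * (X * X ^ 2) := by
    simp only [Y, Q] at hC
    simp only [map_mul, map_pow, map_neg]
    linear_combination hC
  have h3 := congrArg (fun f => pscomp f D) hC2
  simp only [pscomp_add, pscomp_C_mul, pscomp_mul_X_pow hD0, pscomp_X hD0, hCD] at h3
  have hYd : (PowerSeries.C) y0 = Y := rfl
  have hQd : (PowerSeries.C) q0 = Q := rfl
  simp only [map_mul, map_pow, map_neg, hYd, hQd] at h3
  subst hP
  linear_combination (-(X ^ 3 * Y ^ 2 * Q)) * h3
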